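/- Let (P₁,P₂,P₃,P₄) and (P′₁,P′₂,P′₃,P′₄) be two quadruples of nonzero null vectors in ℂ^{n,1}, each pairwise linearly independent, with Gram matrices G and G′. Then there exists a ℂ-linear map A: ℂ^{n,1} → ℂ^{n,1} with ⟨AZ,AW⟩ = ⟨Z,W⟩ for all Z,W and nonzero scalars λ_i with A·P_i = λ_i·P′_i (i=1,2,3,4) if and only if there exists an invertible diagonal complex 4×4 matrix D with G′ = D*·G·D. -/

import Mathlib

open Complex Matrix
open scoped ComplexConjugate

noncomputable section

/-- The Hermitian form of signature `(n,1)` on `ℂ^{n+1}`: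
`⟨Z,W⟩ = Z₁·conj W_{n+1} + Z₂·conj W₂ + ⋯ + Z_n·conj W_n + Z_{n+1}·conj W₁`. -/
def herm {n : ℕ} (Z W : Fin (n + 1) → ℂ) : ℂ :=
  Z 0 * conj (W (Fin.last n)) + Z (Fin.last n) * conj (W 0) +
    ∑ i ∈ Finset.univ.filter (fun i : Fin (n + 1) => i ≠ 0 ∧ i ≠ Fin.last n),
      Z i * conj (W i)

/-- The Gram matrix of a quadruple of vectors. -/
def gram {n : ℕ} (P : Fin 4 → Fin (n + 1) → ℂ) : Matrix (Fin 4) (Fin 4) ℂ :=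
  fun i j => herm (P i) (P j)

/-- A quadruple of nonzero null vectors, pairwise linearly independent. -/
def IsNullQuadruple {n : ℕ} (P : Fin 4 → Fin (n + 1) → ℂ) : Prop :=
  (∀ i, P i ≠ 0) ∧ (∀ i, herm (P i) (P i) = 0) ∧
    ∀ i j, i ≠ j → LinearIndependent ℂ ![P i, P j]

/-- The Korányi–Reimann complex cross-ratio. -/
def crossRatio {n : ℕ} (P₁ P₂ P₃ P₄ : Fin (n + 1) → ℂ) : ℂ :=
  (herm P₃ P₁ * herm P₄ P₂) / (herm P₄ P₁ * herm P₃ P₂)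

/-- Cartan's angular invariant. -/
def cartan {n : ℕ} (P₁ P₂ P₃ : Fin (n + 1) → ℂ) : ℝ :=
  (-(herm P₁ P₂ * herm P₂ P₃ * herm P₃ P₁)).arg

/-- `G` is the normalized Gram matrix of the quadruple `P`. -/
def IsNormalizedGram {n : ℕ} (P : Fin 4 → Fin (n + 1) → ℂ)
    (G : Matrix (Fin 4) (Fin 4) ℂ) : Prop :=
  (∃ d : Fin 4 → ℂ, (∀ i, d i ≠ 0) ∧
      G = (Matrix.diagonal d)ᴴ * gram P * Matrix.diagonal d) ∧
    G 0 1 = 1 ∧ G 1 2 = 1 ∧ G 2 3 = 1 ∧ ‖G 0 2‖ = 1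

/-- Two quadruples are congruent if a linear map preserving the Hermitian form
sends one to the other up to nonzero scalars. -/
def QuadCongruent {n : ℕ} (P P' : Fin 4 → Fin (n + 1) → ℂ) : Prop :=
  ∃ A : (Fin (n + 1) → ℂ) →ₗ[ℂ] (Fin (n + 1) → ℂ),
    (∀ Z W, herm (A Z) (A W) = herm Z W) ∧
    ∃ lam : Fin 4 → ℂ, (∀ i, lam i ≠ 0) ∧ ∀ i, A (P i) = lam i • P' i

/-!
An isometry `A` with `A Pᵢ = λᵢ P'ᵢ` turns `G` into `G'` by the diagonal congruence with
`dᵢ = (conj λᵢ)⁻¹`. Conversely, if `G' = D* G D` then `Qᵢ = conj dᵢ • Pᵢ` has Gram matrix `G'`,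
and it remains to map `Q` to `P'` isometrically (Witt's extension theorem). Because the form has
signature `(n, 1)`, distinct null directions are never orthogonal, so rescaling `P'₁, P'₂` gives a
hyperbolic pair `e₁', e₂'` whose orthogonal complement is positive definite; likewise on the `Q`
side. The isometry sends `e₁ ↦ e₁'`, `e₂ ↦ e₂'` and matches the projections of the two families
to these Euclidean complements, which is possible because their Gram matrices agree.
-/

open Module


theorem exists_linearIsometry_apply_eq_of_inner_eq {𝕜 E ι : Type*} [RCLike 𝕜]
    [NormedAddCommGroup E] [InnerProductSpace 𝕜 E] [FiniteDimensional 𝕜 E] [Fintype ι]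
    (x y : ι → E) (h : ∀ i j, inner 𝕜 (x i) (x j) = inner 𝕜 (y i) (y j)) :
    ∃ L : E →ₗᵢ[𝕜] E, ∀ i, L (x i) = y i := by
  classical
  set u := Fintype.linearCombination 𝕜 x
  set v := Fintype.linearCombination 𝕜 y
  have inner_eq (c d : ι → 𝕜) : inner 𝕜 (v c) (v d) = inner 𝕜 (u c) (u d) := by
    simp [u, v, Fintype.linearCombination_apply, sum_inner, inner_sum, inner_smul_left,
      inner_smul_right, h]
  have hker : LinearMap.ker u ≤ LinearMap.ker v := fun c hc => by
    rw [LinearMap.mem_ker] at hc ⊢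
    rw [← inner_self_eq_zero (𝕜 := 𝕜), inner_eq, hc, inner_zero_left]
  let L₀ : LinearMap.range u →ₗ[𝕜] E :=
    (LinearMap.ker u).liftQ v hker ∘ₗ u.quotKerEquivRange.symm.toLinearMap
  have L₀_apply (c : ι → 𝕜) : L₀ ⟨u c, LinearMap.mem_range_self u c⟩ = v c := by
    simp [L₀, LinearMap.quotKerEquivRange_symm_apply_image]
  have L₀_inner (s t : LinearMap.range u) : inner 𝕜 (L₀ s) (L₀ t) = inner 𝕜 s t := by
    obtain ⟨_, c, rfl⟩ := s
    obtain ⟨_, d, rfl⟩ := t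
    rw [L₀_apply, L₀_apply, inner_eq, Submodule.coe_inner]
  refine ⟨(L₀.isometryOfInner L₀_inner).extend, fun i => ?_⟩
  have hx : x i = u (Pi.single i 1) := by simp [u, Fintype.linearCombination_apply_single]
  have hy : y i = v (Pi.single i 1) := by simp [v, Fintype.linearCombination_apply_single]
  rw [hx, hy, ← L₀_apply]
  exact LinearIsometry.extend_apply _ ⟨_, LinearMap.mem_range_self u _⟩

theorem exists_linearMap_inner_eq_of_finrank_eq {𝕜 E F ι : Type*} [RCLike 𝕜]
    [AddCommGroup E] [Module 𝕜 E] [FiniteDimensional 𝕜 E]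
    [AddCommGroup F] [Module 𝕜 F] [FiniteDimensional 𝕜 F] [Fintype ι]
    (cE : InnerProductSpace.Core 𝕜 E) (cF : InnerProductSpace.Core 𝕜 F)
    (hdim : finrank 𝕜 E = finrank 𝕜 F) (x : ι → E) (y : ι → F)
    (h : ∀ i j, cE.inner (x i) (x j) = cF.inner (y i) (y j)) :
    ∃ B : E →ₗ[𝕜] F, (∀ s t, cF.inner (B s) (B t) = cE.inner s t) ∧ ∀ i, B (x i) = y i := by
  let _ : NormedAddCommGroup E := cE.toNormedAddCommGroup
  let _ : InnerProductSpace 𝕜 E := .ofCore cE.toCore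
  let _ : NormedAddCommGroup F := cF.toNormedAddCommGroup
  let _ : InnerProductSpace 𝕜 F := .ofCore cF.toCore
  let Φ : E ≃ₗᵢ[𝕜] F := (stdOrthonormalBasis 𝕜 E).repr.trans
    ((stdOrthonormalBasis 𝕜 F).reindex (finCongr hdim.symm)).repr.symm
  obtain ⟨L, hL⟩ := exists_linearIsometry_apply_eq_of_inner_eq (fun i => Φ (x i)) y
    fun i j => (Φ.inner_map_map _ _).trans (h i j)
  exact ⟨L.toLinearMap ∘ₗ Φ.toLinearEquiv.toLinearMap,
    fun s t => (L.inner_map_map _ _).trans (Φ.inner_map_map s t), hL⟩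

variable {n : ℕ}

section HermitianForm

variable (Z Z' W W' : Fin (n + 1) → ℂ) (c : ℂ)

lemma herm_add_left : herm (Z + Z') W = herm Z W + herm Z' W := by
  simp only [herm, Pi.add_apply, add_mul, Finset.sum_add_distrib]; ring

lemma herm_smul_left : herm (c • Z) W = c * herm Z W := by
  simp only [herm, Pi.smul_apply, smul_eq_mul, mul_assoc, Finset.mul_sum, mul_add]

lemma conj_herm : conj (herm Z W) = herm W Z := by
  simp only [herm, map_add, map_mul, map_sum, conj_conj, mul_comm]; ring

lemma herm_add_right : herm Z (W + W') = herm Z W + herm Z W' := by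
  rw [← conj_herm, herm_add_left, map_add, conj_herm, conj_herm]

lemma herm_smul_right : herm Z (c • W) = conj c * herm Z W := by
  rw [← conj_herm, herm_smul_left, map_mul, conj_herm]

lemma herm_sub_left : herm (Z - Z') W = herm Z W - herm Z' W := by
  rw [eq_sub_iff_add_eq, ← herm_add_left, sub_add_cancel]

lemma herm_sub_right : herm Z (W - W') = herm Z W - herm Z W' := by
  rw [← conj_herm, herm_sub_left, map_sub, conj_herm, conj_herm]

lemma herm_zero_left : herm 0 W = 0 := by
  simpa using herm_smul_left 0 W 0

def hermL : (Fin (n + 1) → ℂ) →ₗ[ℂ] ℂ where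
  toFun Z := herm Z W
  map_add' Z Z' := herm_add_left Z Z' W
  map_smul' c Z := herm_smul_left Z W c

@[simp] lemma hermL_apply : hermL W Z = herm Z W := rfl

end HermitianForm

/-- On this hyperplane the form is `2 |z₀|² + ∑ |zᵢ|²`. -/
lemma herm_self_re_pos_of_apply_last_eq {z : Fin (n + 1) → ℂ} (hz : z ≠ 0)
    (hlast : z (Fin.last n) = z 0) : 0 < (herm z z).re := by
  set M := Finset.univ.filter fun i : Fin (n + 1) => i ≠ 0 ∧ i ≠ Fin.last n
  have hre : (herm z z).re = 2 * normSq (z 0) + ∑ i ∈ M, normSq (z i) := by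
    simp only [herm, hlast, mul_conj, ← ofReal_sum, add_re, ofReal_re]; ring
  have hM : 0 ≤ ∑ i ∈ M, normSq (z i) := Finset.sum_nonneg fun i _ => normSq_nonneg (z i)
  by_contra! hle
  have hsum : ∀ i ∈ M, normSq (z i) = 0 :=
    (Finset.sum_eq_zero_iff_of_nonneg fun i _ => normSq_nonneg _).1
      (by linarith [normSq_nonneg (z 0)])
  have h0 : z 0 = 0 := by
    rw [← normSq_eq_zero]
    linarith [normSq_nonneg (z 0)]
  refine hz (funext fun i => ?_)
  by_cases hi0 : i = 0
  · rw [hi0, h0, Pi.zero_apply]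
  by_cases hil : i = Fin.last n
  · rw [hil, hlast, h0, Pi.zero_apply]
  exact normSq_eq_zero.1 (hsum i (by simp [M, hi0, hil]))

/-- The plane spanned by `u` and `v` meets the positive hyperplane `z₀ = z_{n+1}` in some
`w ≠ 0`, and the form on this plane is `a u + b v ↦ |b|² ⟨v, v⟩`. -/
lemma herm_self_re_pos_of_orthogonal_null {u v : Fin (n + 1) → ℂ} (hu : herm u u = 0)
    (hvu : herm v u = 0) (hi : LinearIndependent ℂ ![u, v]) : 0 < (herm v v).re := by
  set φ : (Fin (n + 1) → ℂ) → ℂ := fun z => z 0 - z (Fin.last n)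
  have hφu : φ u ≠ 0 := fun h => by
    have := herm_self_re_pos_of_apply_last_eq (hi.ne_zero 0) (sub_eq_zero.1 h).symm
    simp [hu] at this
  set w := φ u • v - φ v • u
  have hw : w ≠ 0 := fun h => by
    have := LinearIndependent.pair_iff.1 hi (-φ v) (φ u) (by rw [← h]; simp only [w]; module)
    exact hφu this.2
  have hwpos := herm_self_re_pos_of_apply_last_eq hw <| by
    simp only [w, φ, Pi.sub_apply, Pi.smul_apply, smul_eq_mul]
    ring
  have huv : herm u v = 0 := by rw [← conj_herm, hvu, map_zero]
  have hww : herm w w = (normSq (φ u) : ℂ) * herm v v := by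
    simp only [w, herm_sub_left, herm_sub_right, herm_smul_left, herm_smul_right, hu, huv, hvu,
      ← mul_conj]
    ring
  rw [hww, re_ofReal_mul] at hwpos
  exact pos_of_mul_pos_right hwpos (normSq_nonneg _)

lemma herm_ne_zero_of_linearIndependent {u v : Fin (n + 1) → ℂ} (hu : herm u u = 0)
    (hv : herm v v = 0) (hi : LinearIndependent ℂ ![u, v]) : herm u v ≠ 0 := fun h => by
  have := herm_self_re_pos_of_orthogonal_null hu (by rw [← conj_herm, h, map_zero]) hi
  simp [hv] at this

def IsHyperbolicPair (e₁ e₂ : Fin (n + 1) → ℂ) : Prop :=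
  herm e₁ e₁ = 0 ∧ herm e₂ e₂ = 0 ∧ herm e₁ e₂ = 1

lemma isHyperbolicPair_inv_smul {u v : Fin (n + 1) → ℂ} (hu : herm u u = 0) (hv : herm v v = 0)
    (huv : herm u v ≠ 0) : IsHyperbolicPair u ((conj (herm u v))⁻¹ • v) := by
  refine ⟨hu, ?_, ?_⟩
  · rw [herm_smul_left, herm_smul_right, hv, mul_zero, mul_zero]
  · rw [herm_smul_right, map_inv₀, conj_conj, inv_mul_cancel₀ huv]

def perp (e₁ e₂ : Fin (n + 1) → ℂ) : Submodule ℂ (Fin (n + 1) → ℂ) :=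
  LinearMap.ker ((hermL e₁).prod (hermL e₂))

lemma mem_perp {e₁ e₂ z : Fin (n + 1) → ℂ} : z ∈ perp e₁ e₂ ↔ herm z e₁ = 0 ∧ herm z e₂ = 0 := by
  simp [perp]

namespace IsHyperbolicPair

variable {e₁ e₂ : Fin (n + 1) → ℂ} (he : IsHyperbolicPair e₁ e₂)
include he

lemma herm_swap : herm e₂ e₁ = 1 := by
  rw [← conj_herm, he.2.2, map_one]

lemma finrank_perp_add_two : finrank ℂ (perp e₁ e₂) + 2 = n + 1 := by
  have hsurj : Function.Surjective ((hermL e₁).prod (hermL e₂)) := fun ⟨a, b⟩ =>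
    ⟨b • e₁ + a • e₂, by simp [herm_add_left, herm_smul_left, he.1, he.2.1, he.2.2, he.herm_swap]⟩
  have := LinearMap.finrank_range_add_finrank_ker ((hermL e₁).prod (hermL e₂))
  rw [LinearMap.range_eq_top.2 hsurj, finrank_top, Module.finrank_prod, Module.finrank_self,
    Module.finrank_fin_fun] at this
  rw [perp]
  omega

lemma herm_self_re_pos_of_mem_perp {z : Fin (n + 1) → ℂ} (hz : z ∈ perp e₁ e₂) (hz0 : z ≠ 0) :
    0 < (herm z z).re := by
  rw [mem_perp] at hz
  refine herm_self_re_pos_of_orthogonal_null he.1 hz.1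
    (LinearIndependent.pair_iff.2 fun s t hst => ?_)
  have hs : s = 0 := by
    simpa [herm_add_left, herm_smul_left, herm_zero_left, he.2.2, hz.2] using
      congrArg (herm · e₂) hst
  subst hs
  exact ⟨rfl, (smul_eq_zero.1 (by simpa using hst)).resolve_right hz0⟩

lemma herm_add_add_of_mem_perp {w w' : Fin (n + 1) → ℂ} (hw : w ∈ perp e₁ e₂)
    (hw' : w' ∈ perp e₁ e₂) (a b a' b' : ℂ) :
    herm (a • e₁ + b • e₂ + w) (a' • e₁ + b' • e₂ + w') =
      a * conj b' + b * conj a' + herm w w' := by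
  rw [mem_perp] at hw hw'
  have h1 : herm e₁ w' = 0 := by rw [← conj_herm, hw'.1, map_zero]
  have h2 : herm e₂ w' = 0 := by rw [← conj_herm, hw'.2, map_zero]
  simp only [herm_add_left, herm_add_right, herm_smul_left, herm_smul_right, he.1, he.2.1, he.2.2,
    he.herm_swap, hw.1, hw.2, h1, h2]
  ring

def perpProj : (Fin (n + 1) → ℂ) →ₗ[ℂ] perp e₁ e₂ :=
  LinearMap.codRestrict (perp e₁ e₂)
    (LinearMap.id - ((hermL e₂).smulRight e₁ + (hermL e₁).smulRight e₂)) fun Z => by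
      simp [mem_perp, herm_sub_left, herm_add_left, herm_smul_left, he.1, he.2.1, he.2.2,
        he.herm_swap]

lemma perpProj_apply (Z : Fin (n + 1) → ℂ) :
    (he.perpProj Z : Fin (n + 1) → ℂ) = Z - (herm Z e₂ • e₁ + herm Z e₁ • e₂) := rfl

lemma eq_add_perpProj (Z : Fin (n + 1) → ℂ) :
    Z = herm Z e₂ • e₁ + herm Z e₁ • e₂ + he.perpProj Z := by
  rw [perpProj_apply]
  abel

lemma herm_perpProj (Z W : Fin (n + 1) → ℂ) :
    herm (he.perpProj Z : Fin (n + 1) → ℂ) (he.perpProj W) =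
      herm Z W - herm Z e₂ * conj (herm W e₁) - herm Z e₁ * conj (herm W e₂) := by
  have := he.herm_add_add_of_mem_perp (he.perpProj Z).2 (he.perpProj W).2
    (herm Z e₂) (herm Z e₁) (herm W e₂) (herm W e₁)
  rw [← eq_add_perpProj, ← eq_add_perpProj] at this
  rw [this]
  ring

/-- Mathlib's inner products are conjugate-linear in the first argument, hence `⟪s, t⟫ = ⟨t, s⟩`. -/
abbrev perpInnerCore : InnerProductSpace.Core ℂ (perp e₁ e₂) where
  inner s t := herm (t : Fin (n + 1) → ℂ) s
  conj_inner_symm s t := conj_herm _ _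
  re_inner_nonneg s := by
    rcases eq_or_ne s 0 with rfl | hs
    · simp [herm_zero_left]
    · exact (he.herm_self_re_pos_of_mem_perp s.2 (by simpa using hs)).le
  add_left s t r := by
    change herm _ _ = herm _ _ + herm _ _
    rw [Submodule.coe_add, herm_add_right]
  smul_left s t c := by
    change herm _ _ = _ * herm _ _
    rw [Submodule.coe_smul, herm_smul_right]
  definite s hs := by
    by_contra h
    have hpos := he.herm_self_re_pos_of_mem_perp s.2 (by simpa using h)
    rw [show herm (s : Fin (n + 1) → ℂ) s = 0 from hs, zero_re] at hpos
    exact lt_irrefl 0 hpos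

end IsHyperbolicPair

/-- Send `e₁, e₂` to `e₁', e₂'`, and `perp e₁ e₂` to `perp e₁' e₂'` by an isometry of inner
product spaces matching the projections of the two families. -/
theorem exists_isometry_of_isHyperbolicPair {ι : Type*} [Fintype ι]
    {e₁ e₂ e₁' e₂' : Fin (n + 1) → ℂ} (he : IsHyperbolicPair e₁ e₂)
    (he' : IsHyperbolicPair e₁' e₂') (x y : ι → Fin (n + 1) → ℂ)
    (hg : ∀ i j, herm (x i) (x j) = herm (y i) (y j))
    (h₁ : ∀ i, herm (x i) e₁ = herm (y i) e₁') (h₂ : ∀ i, herm (x i) e₂ = herm (y i) e₂') :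
    ∃ A : (Fin (n + 1) → ℂ) →ₗ[ℂ] (Fin (n + 1) → ℂ),
      (∀ Z W, herm (A Z) (A W) = herm Z W) ∧ ∀ i, A (x i) = y i := by
  obtain ⟨B, hB, hBx⟩ := exists_linearMap_inner_eq_of_finrank_eq he.perpInnerCore
    he'.perpInnerCore (by linarith [he.finrank_perp_add_two, he'.finrank_perp_add_two])
    (fun i => he.perpProj (x i)) (fun i => he'.perpProj (y i)) fun i j => by
      change herm _ _ = herm _ _
      rw [he.herm_perpProj, he'.herm_perpProj, hg, h₁, h₁, h₂, h₂]
  let A := (hermL e₂).smulRight e₁' + (hermL e₁).smulRight e₂' +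
    (perp e₁' e₂').subtype ∘ₗ B ∘ₗ he.perpProj
  have hA (Z) : A Z = herm Z e₂ • e₁' + herm Z e₁ • e₂' + B (he.perpProj Z) := rfl
  refine ⟨A, fun Z W => ?_, fun i => ?_⟩
  · rw [hA, hA, he'.herm_add_add_of_mem_perp (B _).2 (B _).2]
    rw [show ∀ s t, herm (B s : Fin (n + 1) → ℂ) (B t) = herm (s : Fin (n + 1) → ℂ) t from
      fun s t => hB t s, he.herm_perpProj]
    ring
  · rw [hA, h₁, h₂, hBx]
    exact (he'.eq_add_perpProj (y i)).symm

theorem exists_isometry_of_herm_eq {ι : Type*} [Fintype ι] (x y : ι → Fin (n + 1) → ℂ)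
    (hg : ∀ i j, herm (x i) (x j) = herm (y i) (y j)) {i₀ i₁ : ι}
    (h₀ : herm (y i₀) (y i₀) = 0) (h₁ : herm (y i₁) (y i₁) = 0) (h₀₁ : herm (y i₀) (y i₁) ≠ 0) :
    ∃ A : (Fin (n + 1) → ℂ) →ₗ[ℂ] (Fin (n + 1) → ℂ),
      (∀ Z W, herm (A Z) (A W) = herm Z W) ∧ ∀ i, A (x i) = y i := by
  have he := isHyperbolicPair_inv_smul ((hg _ _).trans h₀) ((hg _ _).trans h₁)
    ((hg _ _).trans_ne h₀₁)
  rw [hg] at he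
  exact exists_isometry_of_isHyperbolicPair he (isHyperbolicPair_inv_smul h₀ h₁ h₀₁) x y hg
    (fun i => hg i i₀) fun i => by rw [herm_smul_right, herm_smul_right, hg]

lemma gram_star_smul (d : Fin 4 → ℂ) (P : Fin 4 → Fin (n + 1) → ℂ) :
    gram (fun i => star (d i) • P i) = (diagonal d)ᴴ * gram P * diagonal d := by
  ext i j
  rw [mul_diagonal, diagonal_conjTranspose, diagonal_mul]
  change herm _ _ = star (d i) * herm (P i) (P j) * d j
  rw [herm_smul_left, herm_smul_right, Complex.star_def, conj_conj]
  ring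

theorem stmt1_general (n : ℕ) (P P' : Fin 4 → Fin (n + 1) → ℂ)
    (hP' : IsNullQuadruple P') :
    QuadCongruent P P' ↔
      ∃ d : Fin 4 → ℂ, (∀ i, d i ≠ 0) ∧
        gram P' = (Matrix.diagonal d)ᴴ * gram P * Matrix.diagonal d := by
  constructor
  · rintro ⟨A, hA, lam, hlam, hAP⟩
    refine ⟨fun i => (star (lam i))⁻¹, fun i => by simpa using hlam i, ?_⟩
    have hAP' : gram (fun i => A (P i)) = gram P := by
      ext i j
      exact hA (P i) (P j)
    rw [← hAP', ← gram_star_smul]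
    congr 1
    ext1 i
    rw [star_inv₀, star_star, hAP, inv_smul_smul₀ (hlam i)]
  · rintro ⟨d, hd, hG⟩
    obtain ⟨-, hnull', hind'⟩ := hP'
    have hsd (i) : star (d i) ≠ 0 := by simpa using hd i
    have hQ : gram (fun i => star (d i) • P i) = gram P' := by rw [gram_star_smul, hG]
    obtain ⟨A, hA, hAP⟩ := exists_isometry_of_herm_eq (fun i => star (d i) • P i) P'
      (fun i j => congrFun (congrFun hQ i) j) (hnull' 0) (hnull' 1)
      (herm_ne_zero_of_linearIndependent (hnull' 0) (hnull' 1) (hind' 0 1 (by decide)))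
    refine ⟨A, hA, fun i => (star (d i))⁻¹, fun i => inv_ne_zero (hsd i), fun i => ?_⟩
    rw [← hAP, map_smul, inv_smul_smul₀ (hsd i)]

/-- congruence of quadruples corresponds to equivalence of Gram matrices. -/
theorem stmt1 (n : ℕ) (P P' : Fin 4 → Fin (n + 1) → ℂ)
    (hP : IsNullQuadruple P) (hP' : IsNullQuadruple P') :
    QuadCongruent P P' ↔
      ∃ d : Fin 4 → ℂ, (∀ i, d i ≠ 0) ∧
        gram P' = (Matrix.diagonal d)ᴴ * gram P * Matrix.diagonal d :=
  stmt1_general n P P' hP'
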